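/- arXiv:math/0304163 — 5 statements merged into one kernel-verified Lean document; each statement's English description precedes it below -/
import Mathlib

section
/- For every real number μ ≥ 2, the subgroup Γ_μ of SL(2, ℝ) generated by γ₁(μ) and γ₂(μ) is a free group of rank 2 freely generated by γ₁(μ) and γ₂(μ); that is, the canonical homomorphism from the free group on two generators to SL(2, ℝ) sending the generators to γ₁(μ) and γ₂(μ) is injective. -/
/-!
For `n ≠ 0` the power `γ₁(μ)ⁿ = γ₁(nμ)` is the shear `(x, y) ↦ (x + nμy, y)`; since `|nμ| ≥ 2`, it
maps the cone `|x| < |y|` into the cone `|y| < |x|`, because `|x + nμy| ≥ 2|y| - |x| > |y|`.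
Symmetrically `γ₂(μ)ⁿ` maps `|y| < |x|` into `|x| < |y|`. By the ping-pong lemma, no nontrivial
reduced word in the generators acts trivially on `ℝ²`.
-/

open Matrix
open scoped MatrixGroups

/-- The parabolic matrix `γ₁(μ) = !![1, μ; 0, 1]` in `SL(2, ℝ)`. -/
def gamma1 (μ : ℝ) : SL(2, ℝ) :=
  ⟨!![1, μ; 0, 1], by norm_num [Matrix.det_fin_two_of]⟩

/-- The parabolic matrix `γ₂(μ) = !![1, 0; -μ, 1]` in `SL(2, ℝ)`. -/
def gamma2 (μ : ℝ) : SL(2, ℝ) :=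
  ⟨!![1, 0; -μ, 1], by norm_num [Matrix.det_fin_two_of]⟩

/-- `Γ_μ`, the subgroup of `SL(2, ℝ)` generated by `γ₁(μ)` and `γ₂(μ)`. -/
def Gamma (μ : ℝ) : Subgroup (Matrix.SpecialLinearGroup (Fin 2) ℝ) :=
  Subgroup.closure {gamma1 μ, gamma2 μ}

open scoped Function Pointwise

/-- `FreeGroup ι` is the free product of copies of `FreeGroup Unit ≃ ℤ`, so this is the ping-pong
lemma for free products. -/
theorem FreeGroup.injective_lift_of_ping_pong_zpow {ι G α : Type*} [Nontrivial ι] [Group G]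
    [MulAction G α] (a : ι → G) (X : ι → Set α) (hXnonempty : ∀ i, (X i).Nonempty)
    (hXdisj : Pairwise (Disjoint on X))
    (hpp : Pairwise fun i j => ∀ n : ℤ, n ≠ 0 → a i ^ n • X j ⊆ X i) :
    Function.Injective (FreeGroup.lift a) := by
  have hfactor : FreeGroup.lift a =
      (Monoid.CoprodI.lift fun i => FreeGroup.lift fun _ => a i).comp
        freeGroupEquivCoprodI.toMonoidHom := by
    ext i
    simp
  rw [hfactor, MonoidHom.coe_comp]
  refine Function.Injective.comp ?_ freeGroupEquivCoprodI.injective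
  obtain ⟨i⟩ := (inferInstance : Nonempty ι)
  refine Monoid.CoprodI.lift_injective_of_ping_pong _
    (Or.inr ⟨i, Cardinal.natCast_lt_aleph0.le.trans (Cardinal.aleph0_le_mk _)⟩) X hXnonempty
    hXdisj ?_
  intro i j hij h hh
  obtain ⟨n, rfl⟩ := FreeGroup.freeGroupUnitEquivInt.symm.surjective h
  have hn : n ≠ 0 := by rintro rfl; exact hh (zpow_zero _)
  simpa [FreeGroup.freeGroupUnitEquivInt] using hpp hij n hn

def gamma1Hom : Multiplicative ℝ →* SL(2, ℝ) :=
  MonoidHom.mk' (fun t => gamma1 t.toAdd) fun s t =>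
    Subtype.ext (by rw [Matrix.SpecialLinearGroup.coe_mul]; simp [gamma1, add_comm])

def gamma2Hom : Multiplicative ℝ →* SL(2, ℝ) :=
  MonoidHom.mk' (fun t => gamma2 t.toAdd) fun s t =>
    Subtype.ext (by rw [Matrix.SpecialLinearGroup.coe_mul]; simp [gamma2, add_comm])

lemma gamma1_zpow (μ : ℝ) (n : ℤ) : gamma1 μ ^ n = gamma1 (n * μ) := by
  calc gamma1 μ ^ n = gamma1Hom (.ofAdd μ) ^ n := rfl
    _ = gamma1Hom (.ofAdd (n • μ)) := by rw [← map_zpow, ofAdd_zsmul]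
    _ = gamma1 (n * μ) := by rw [zsmul_eq_mul]; rfl

lemma gamma2_zpow (μ : ℝ) (n : ℤ) : gamma2 μ ^ n = gamma2 (n * μ) := by
  calc gamma2 μ ^ n = gamma2Hom (.ofAdd μ) ^ n := rfl
    _ = gamma2Hom (.ofAdd (n • μ)) := by rw [← map_zpow, ofAdd_zsmul]
    _ = gamma2 (n * μ) := by rw [zsmul_eq_mul]; rfl

lemma gamma1_smul (t : ℝ) (v : Fin 2 → ℝ) : gamma1 t • v = ![v 0 + t * v 1, v 1] := by
  rw [Matrix.SpecialLinearGroup.smul_def]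
  ext i; fin_cases i <;> simp [gamma1, vecHead, vecTail]

lemma gamma2_smul (t : ℝ) (v : Fin 2 → ℝ) : gamma2 t • v = ![v 0, v 1 - t * v 0] := by
  rw [Matrix.SpecialLinearGroup.smul_def]
  ext i; fin_cases i <;> simp [gamma2, vecHead, vecTail, neg_add_eq_sub]

lemma abs_lt_abs_add_mul {x y t : ℝ} (ht : 2 ≤ |t|) (h : |x| < |y|) : |y| < |x + t * y| := by
  have hty : 2 * |y| ≤ |t * y| := by
    rw [abs_mul]; exact mul_le_mul_of_nonneg_right ht (abs_nonneg y)
  have := abs_sub (x + t * y) x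
  rw [add_sub_cancel_left] at this
  linarith

lemma abs_le_abs_intCast_mul {n : ℤ} (hn : n ≠ 0) (μ : ℝ) : |μ| ≤ |n * μ| := by
  rw [abs_mul]
  exact le_mul_of_one_le_left (abs_nonneg μ) (by exact_mod_cast Int.one_le_abs hn)

lemma two_le_abs_intCast_mul {μ : ℝ} (hμ : 2 ≤ μ) {n : ℤ} (hn : n ≠ 0) : 2 ≤ |n * μ| :=
  hμ.trans ((le_abs_self μ).trans (abs_le_abs_intCast_mul hn μ))

def horizontalCone : Set (Fin 2 → ℝ) := {v | |v 1| < |v 0|}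

def verticalCone : Set (Fin 2 → ℝ) := {v | |v 0| < |v 1|}

lemma disjoint_horizontalCone_verticalCone : Disjoint horizontalCone verticalCone :=
  Set.disjoint_left.mpr fun v (h : |v 1| < |v 0|) (h' : |v 0| < |v 1|) => lt_asymm h h'

lemma gamma1_zpow_smul_verticalCone {μ : ℝ} (hμ : 2 ≤ μ) {n : ℤ} (hn : n ≠ 0) :
    gamma1 μ ^ n • verticalCone ⊆ horizontalCone := by
  rintro _ ⟨v, hv, rfl⟩
  simpa [horizontalCone, gamma1_zpow, gamma1_smul] using
    abs_lt_abs_add_mul (two_le_abs_intCast_mul hμ hn) hv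

lemma gamma2_zpow_smul_horizontalCone {μ : ℝ} (hμ : 2 ≤ μ) {n : ℤ} (hn : n ≠ 0) :
    gamma2 μ ^ n • horizontalCone ⊆ verticalCone := by
  rintro _ ⟨v, hv, rfl⟩
  have ht : 2 ≤ |-(n * μ)| := by rw [abs_neg]; exact two_le_abs_intCast_mul hμ hn
  simpa [verticalCone, gamma2_zpow, gamma2_smul, sub_eq_add_neg] using
    abs_lt_abs_add_mul ht hv

/-- For `μ ≥ 2`, the canonical homomorphism from the free group on two generators to
`SL(2, ℝ)` sending the generators to `γ₁(μ)` and `γ₂(μ)` is injective, and its range is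
`Γ_μ`; that is, `Γ_μ` is a free group of rank 2 freely generated by `γ₁(μ)` and `γ₂(μ)`. -/
theorem stmt0 (μ : ℝ) (hμ : 2 ≤ μ) :
    Function.Injective
      (FreeGroup.lift (fun i : Fin 2 => if i = 0 then gamma1 μ else gamma2 μ) :
        FreeGroup (Fin 2) →* SL(2, ℝ)) ∧
    (FreeGroup.lift (fun i : Fin 2 => if i = 0 then gamma1 μ else gamma2 μ) :
        FreeGroup (Fin 2) →* SL(2, ℝ)).range = Gamma μ := by
  constructor
  · refine FreeGroup.injective_lift_of_ping_pong_zpow _ ![horizontalCone, verticalCone] ?_ ?_ ?_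
    · intro i
      fin_cases i
      · exact ⟨![1, 0], by simp [horizontalCone]⟩
      · exact ⟨![0, 1], by simp [verticalCone]⟩
    · intro i j hij
      fin_cases i <;> fin_cases j
      all_goals first
        | exact (hij rfl).elim
        | exact disjoint_horizontalCone_verticalCone
        | exact disjoint_horizontalCone_verticalCone.symm
    · intro i j hij n hn
      fin_cases i <;> fin_cases j
      all_goals first
        | exact (hij rfl).elim
        | exact gamma1_zpow_smul_verticalCone hμ hn
        | exact gamma2_zpow_smul_horizontalCone hμ hn
  · rw [FreeGroup.range_lift_eq_closure, Gamma]
    congr 1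
    ext g
    simp [Fin.exists_fin_two, eq_comm]
end

section
/- Let 0 < μ < 2 and suppose the image of Γ_μ in PSL(2, ℝ) is a discrete subgroup. Then the image of γ₁(μ)·γ₂(μ) in PSL(2, ℝ) has finite order; in particular Γ_μ is not a free group of rank 2 on γ₁(μ) and γ₂(μ). -/
open Matrix
open scoped MatrixGroups

/-- The topology on `SL(2, ℝ)` as a subspace of the (topological) space of matrices. -/
instance : TopologicalSpace SL(2, ℝ) :=
  inferInstanceAs (TopologicalSpace { A : Matrix (Fin 2) (Fin 2) ℝ // A.det = 1 })

/-- The quotient map `SL(2, ℝ) → PSL(2, ℝ) = SL(2, ℝ)/{±I}` (quotient by the center). -/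
noncomputable def toPSL : SL(2, ℝ) →* PSL(2, ℝ) :=
  QuotientGroup.mk' (Subgroup.center (Matrix.SpecialLinearGroup (Fin 2) ℝ))

/-!
The product `A = γ₁(μ)γ₂(μ)` has trace `2 - μ² ∈ (-2, 2)`, so it is elliptic. Writing its trace as
`2 cos θ` with `sin θ ≠ 0`, Cayley–Hamilton yields the Chebyshev formula
`sin θ • Aⁿ = sin (nθ) • A - sin (nθ - θ) • 1`, so `Aⁿ` is a continuous `2π`-periodic function of
`nθ`. By Dirichlet's approximation theorem some `nθ` with `n > 0` lies arbitrarily close to `2πℤ`,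
hence positive powers of `A` accumulate at `1`, and discreteness of the image in `PSL(2, ℝ)` forces
a power of `A` into the center `{±1}`. Finally, an injective map out of the torsion-free free group
cannot send the nontrivial word `x₀x₁` to an element of finite order.
-/

open Set

section
open Real

theorem sin_smul_pow_eq_of_mul_self_eq {A : Type*} [Ring A] [Algebra ℝ A] {x : A} {θ : ℝ}
    (hx : x * x = (2 * cos θ) • x - 1) (n : ℕ) :
    sin θ • x ^ n = sin (n * θ) • x - sin (n * θ - θ) • (1 : A) := by
  induction n with
  | zero => simp
  | succ n ih =>
    have hsin : sin ((n + 1 : ℕ) * θ) = 2 * cos θ * sin (n * θ) - sin (n * θ - θ) := by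
      rw [Nat.cast_succ, add_mul, one_mul, sin_add, sin_sub]; ring
    rw [pow_succ, ← smul_mul_assoc, ih, sub_mul, smul_mul_assoc, smul_mul_assoc, one_mul, hx, hsin,
      Nat.cast_succ, add_one_mul, add_sub_cancel_right]
    module

theorem Function.Periodic.mem_closure_image_nat_mul {X : Type*} [TopologicalSpace X] {F : ℝ → X}
    {T : ℝ} (hF : Function.Periodic F T) (hT : T ≠ 0) (hc : ContinuousAt F 0) (θ : ℝ) :
    F 0 ∈ closure ((fun n : ℕ => F (n * θ)) '' Ioi 0) := by
  refine mem_closure_iff_nhds.mpr fun U hU => ?_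
  obtain ⟨ε, hε, hball⟩ := Metric.mem_nhds_iff.mp (hc hU)
  obtain ⟨N, hN⟩ := exists_nat_gt (|T| / ε)
  have hN0 : 0 < N := by exact_mod_cast (div_nonneg (abs_nonneg T) hε.le).trans_lt hN
  obtain ⟨k, hk0, -, hk⟩ := Real.exists_nat_abs_mul_sub_round_le (θ / T) hN0
  refine ⟨F (k * θ), ?_, k, hk0, rfl⟩
  rw [← hF.sub_int_mul_eq (round (k * (θ / T)))]
  apply hball
  rw [Metric.mem_ball, dist_zero_right, norm_eq_abs]
  calc |k * θ - round (k * (θ / T)) * T| = |T| * |k * (θ / T) - round (k * (θ / T))| := by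
        rw [← abs_mul]; congr 1; field_simp
    _ ≤ |T| * (1 / (N + 1)) := by gcongr
    _ < ε := by
        rw [div_lt_iff₀ hε] at hN
        rw [mul_one_div, div_lt_iff₀ (by positivity)]; nlinarith

theorem isOfFinOrder_of_one_mem_closure_pow {G : Type*} [Group G] [TopologicalSpace G]
    {H : Subgroup G} [DiscreteTopology H] {x : G} (hx : x ∈ H)
    (h : (1 : G) ∈ closure ((x ^ ·) '' Ioi 0)) : IsOfFinOrder x := by
  obtain ⟨U, hU, hUH⟩ := isOpen_induced_iff.mp (isOpen_discrete {(1 : H)})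
  have h1U : (1 : G) ∈ U := show (1 : H) ∈ Subtype.val ⁻¹' U from hUH ▸ rfl
  obtain ⟨_, hU', n, hn, rfl⟩ := mem_closure_iff_nhds.mp h U (hU.mem_nhds h1U)
  have : (⟨x ^ n, pow_mem hx n⟩ : H) ∈ Subtype.val ⁻¹' U := hU'
  rw [hUH] at this
  exact isOfFinOrder_iff_pow_eq_one.mpr ⟨n, hn, congrArg Subtype.val this⟩

theorem FreeGroup.of_mul_of_ne_one {α : Type*} (i j : α) : of i * of j ≠ 1 := by
  intro h
  have := congrArg (FreeGroup.lift fun _ => Multiplicative.ofAdd (1 : ℤ)) h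
  rw [_root_.map_mul, lift_apply_of, lift_apply_of, ← ofAdd_add, _root_.map_one,
    ofAdd_eq_one] at this
  norm_num at this

theorem FreeGroup.not_injective_lift_of_isOfFinOrder_mul {α G : Type*} [Group G] {f : α → G}
    (i j : α) (h : IsOfFinOrder (f i * f j)) : ¬ Function.Injective (lift f) := fun hinj =>
  of_mul_of_ne_one i j (hinj.isOfFinOrder_iff.mp (by simpa using h)).eq_one'

namespace Matrix.SpecialLinearGroup

theorem isOfFinOrder_of_isOfFinOrder_mk {n R : Type*} [Fintype n] [DecidableEq n] [Nonempty n]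
    [CommRing R] {A : SpecialLinearGroup n R}
    (h : IsOfFinOrder (A : SpecialLinearGroup n R ⧸ Subgroup.center (SpecialLinearGroup n R))) :
    IsOfFinOrder A := by
  obtain ⟨k, hk, hAk⟩ := isOfFinOrder_iff_pow_eq_one.mp h
  obtain ⟨r, hr, hrA⟩ := mem_center_iff.mp ((QuotientGroup.eq_one_iff _).mp hAk)
  refine isOfFinOrder_iff_pow_eq_one.mpr ⟨k * Fintype.card n, by positivity, ?_⟩
  ext1
  rw [pow_mul, coe_pow, ← hrA, ← map_pow, hr, map_one, coe_one]

theorem coe_mul_self_eq_trace_smul_sub_one {R : Type*} [CommRing R] (A : SL(2, R)) :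
    (A * A : Matrix (Fin 2) (Fin 2) R) = trace (A : Matrix (Fin 2) (Fin 2) R) • A - 1 := by
  have hdet := A.det_coe
  rw [det_fin_two] at hdet
  ext i j
  fin_cases i <;> fin_cases j <;> simp [mul_apply, trace_fin_two]
  · linear_combination -hdet
  · ring
  · ring
  · linear_combination -hdet

theorem one_mem_closure_pow_of_abs_trace_lt_two (A : SL(2, ℝ))
    (h : |trace (A : Matrix (Fin 2) (Fin 2) ℝ)| < 2) :
    (1 : SL(2, ℝ)) ∈ closure ((A ^ ·) '' Ioi 0) := by
  set M : Matrix (Fin 2) (Fin 2) ℝ := (A : Matrix (Fin 2) (Fin 2) ℝ)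
  obtain ⟨hlo, hhi⟩ := abs_lt.mp h
  set θ := arccos (trace M / 2)
  have hcos : 2 * cos θ = trace M := by rw [cos_arccos (by linarith) (by linarith)]; ring
  have hsin : sin θ ≠ 0 :=
    (sin_pos_of_pos_of_lt_pi (arccos_pos.mpr (by linarith)) (arccos_lt_pi.mpr (by linarith))).ne'
  set F : ℝ → Matrix (Fin 2) (Fin 2) ℝ := fun t => (sin θ)⁻¹ • (sin t • M - sin (t - θ) • 1)
  have hF : F.Periodic (2 * π) := fun t => by simp [F, add_sub_right_comm]
  have hM : M * M = (2 * cos θ) • M - 1 := hcos ▸ coe_mul_self_eq_trace_smul_sub_one A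
  have hpow (n : ℕ) : F (n * θ) = ((A ^ n : SL(2, ℝ)) : Matrix (Fin 2) (Fin 2) ℝ) := by
    simp only [F]
    rw [coe_pow, ← sin_smul_pow_eq_of_mul_self_eq hM, inv_smul_smul₀ hsin]
  have hF0 : F 0 = 1 := by simp [F, hsin]
  have := hF.mem_closure_image_nat_mul two_pi_pos.ne' (by fun_prop) θ
  have hind : Topology.IsInducing (X := SL(2, ℝ)) fun B => (B : Matrix (Fin 2) (Fin 2) ℝ) := ⟨rfl⟩
  rw [hind.closure_eq_preimage_closure_image, mem_preimage, image_image]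
  simpa [hF0, hpow] using this

end Matrix.SpecialLinearGroup

end

theorem trace_coe_gamma1_mul_gamma2 (μ : ℝ) :
    trace ((gamma1 μ * gamma2 μ : SL(2, ℝ)) : Matrix (Fin 2) (Fin 2) ℝ) = 2 - μ ^ 2 := by
  change trace (!![1, μ; 0, 1] * !![1, 0; -μ, 1]) = _
  rw [mul_fin_two, trace_fin_two_of]
  ring

theorem isOfFinOrder_of_toPSL_mem_of_abs_trace_lt_two {H : Subgroup PSL(2, ℝ)}
    [DiscreteTopology H] {A : SL(2, ℝ)} (hA : toPSL A ∈ H)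
    (h : |trace (A : Matrix (Fin 2) (Fin 2) ℝ)| < 2) : IsOfFinOrder A := by
  have hcl : (1 : PSL(2, ℝ)) ∈ closure ((toPSL A ^ ·) '' Ioi 0) := by
    simpa using map_mem_closure (f := toPSL) continuous_quotient_mk'
      (SpecialLinearGroup.one_mem_closure_pow_of_abs_trace_lt_two A h)
      (by rintro _ ⟨n, hn, rfl⟩; exact ⟨n, hn, (map_pow toPSL A n).symm⟩)
  exact SpecialLinearGroup.isOfFinOrder_of_isOfFinOrder_mk
    (isOfFinOrder_of_one_mem_closure_pow hA hcl)

/-- Let `0 < μ < 2` and suppose the image of `Γ_μ` in `PSL(2, ℝ)` is a discrete subgroup.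
Then the image of `γ₁(μ)·γ₂(μ)` in `PSL(2, ℝ)` has finite order; in particular `Γ_μ` is
not a free group of rank 2 on `γ₁(μ)` and `γ₂(μ)`. -/
theorem stmt2 (μ : ℝ) (h0 : 0 < μ) (h2 : μ < 2)
    (hdisc : DiscreteTopology ((Gamma μ).map toPSL)) :
    (∃ n : ℕ, 0 < n ∧ (toPSL (gamma1 μ * gamma2 μ)) ^ n = 1) ∧
    ¬ Function.Injective
      (FreeGroup.lift (fun i : Fin 2 => if i = 0 then gamma1 μ else gamma2 μ) :
        FreeGroup (Fin 2) →* SL(2, ℝ)) := by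
  have hmem : toPSL (gamma1 μ * gamma2 μ) ∈ (Gamma μ).map toPSL :=
    Subgroup.mem_map_of_mem _ <|
      mul_mem (Subgroup.subset_closure (by simp)) (Subgroup.subset_closure (by simp))
  have htrace : |trace ((gamma1 μ * gamma2 μ : SL(2, ℝ)) : Matrix (Fin 2) (Fin 2) ℝ)| < 2 := by
    rw [trace_coe_gamma1_mul_gamma2, abs_lt]
    constructor <;> nlinarith
  have hfin := isOfFinOrder_of_toPSL_mem_of_abs_trace_lt_two hmem htrace
  exact ⟨isOfFinOrder_iff_pow_eq_one.mp (toPSL.isOfFinOrder hfin),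
    FreeGroup.not_injective_lift_of_isOfFinOrder_mul 0 1 (by simpa using hfin)⟩
end

section
/- Let A be a symmetric matrix with nonnegative integer entries and zero diagonal which is irreducible (i.e., the multigraph it describes is connected), and suppose some entry of A is at least 2 (a multiple edge). If the spectral radius of A is strictly greater than 2, then the spectral radius of A is at least √5. -/
/-!
Lower bounds on the spectral radius `ρ` come from Rayleigh quotients: for symmetric `B` the
largest eigenvalue is at least `wᵀBw / wᵀw`. An edge `ab` of multiplicity `≥ 3` gives `ρ ≥ 3`
with `w = e_a + e_b`. A double edge `uv` together with a further edge `vk` gives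
`wᵀBw ≥ 10√5 = √5 · wᵀw` for `w = 2 e_u + √5 e_v + e_k`. In the remaining case no edge leaves
the double edge `ij`, so by connectivity the multigraph is that double edge alone and
Gershgorin's theorem gives `ρ ≤ 2`.
-/

open Matrix

/-- The spectral radius of a real square matrix: the maximum (supremum) of the moduli of
its complex eigenvalues, i.e. of the complex roots of its characteristic polynomial. -/
noncomputable def specRad {n : Type*} [Fintype n] [DecidableEq n]
    (A : Matrix n n ℝ) : ℝ :=
  sSup ((fun z : ℂ => ‖z‖) '' {z : ℂ | (A.charpoly.map (algebraMap ℝ ℂ)).IsRoot z})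

theorem LinearMap.IsSymmetric.exists_hasEigenvalue_re_inner_le {𝕜 E : Type*} [RCLike 𝕜]
    [NormedAddCommGroup E] [InnerProductSpace 𝕜 E] [FiniteDimensional 𝕜 E] {T : E →ₗ[𝕜] E}
    (hT : T.IsSymmetric) {x : E} (hx : x ≠ 0) :
    ∃ μ : ℝ, Module.End.HasEigenvalue T μ ∧ RCLike.re (inner 𝕜 (T x) x) ≤ μ * ‖x‖ ^ 2 := by
  have : Nontrivial E := ⟨⟨x, 0, hx⟩⟩
  refine ⟨_, hT.hasEigenvalue_iSup_of_finiteDimensional, ?_⟩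
  rw [← div_le_iff₀ (by positivity)]
  refine le_ciSup
    (f := fun y : {y : E // y ≠ 0} => RCLike.re (inner 𝕜 (T y) y) / ‖(y : E)‖ ^ 2)
    ⟨‖T.toContinuousLinearMap‖, ?_⟩ ⟨x, hx⟩
  rintro _ ⟨y, rfl⟩
  exact (le_abs_self _).trans (T.toContinuousLinearMap.rayleighQuotient_le_norm y)

namespace Matrix

variable {n : Type*} [Fintype n] [DecidableEq n]

theorem IsHermitian.exists_isRoot_charpoly_dotProduct_mulVec_le {B : Matrix n n ℝ}
    (hB : B.IsHermitian) {w : n → ℝ} (hw : w ≠ 0) :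
    ∃ μ, B.charpoly.IsRoot μ ∧ w ⬝ᵥ (B *ᵥ w) ≤ μ * (w ⬝ᵥ w) := by
  obtain ⟨μ, hμ, hle⟩ := (isSymmetric_toEuclideanLin_iff.mpr hB)
    |>.exists_hasEigenvalue_re_inner_le (x := WithLp.toLp 2 w) (by simpa using hw)
  refine ⟨μ, ?_, ?_⟩
  · rw [← mem_spectrum_iff_isRoot_charpoly, ← spectrum_toLpLin 2]
    exact Module.End.hasEigenvalue_iff_mem_spectrum.mp hμ
  · rw [EuclideanSpace.real_norm_sq_eq] at hle
    simpa [EuclideanSpace.inner_eq_star_dotProduct, dotProduct, sq] using hle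

section Irreducible

variable {ι R : Type*} [Fintype ι] [DecidableEq ι] [Semiring R]

theorem pow_apply_eq_zero_of_forall_apply_eq_zero (A : Matrix ι ι R) {S : Set ι}
    (hS : ∀ a ∈ S, ∀ b ∉ S, A a b = 0) (m : ℕ) {a b : ι} (ha : a ∈ S) (hb : b ∉ S) :
    (A ^ m) a b = 0 := by
  induction m generalizing b with
  | zero => exact one_apply_ne (by rintro rfl; exact hb ha)
  | succ m ih =>
    rw [pow_succ, mul_apply]
    refine Finset.sum_eq_zero fun t _ => ?_
    by_cases ht : t ∈ S
    · rw [hS t ht b hb, mul_zero]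
    · rw [ih ht, zero_mul]

theorem mem_of_forall_apply_eq_zero {A : Matrix ι ι R} (hA : ∀ i j, ∃ k : ℕ, (A ^ k) i j ≠ 0)
    {S : Set ι} (hS : ∀ a ∈ S, ∀ b ∉ S, A a b = 0) {a : ι} (ha : a ∈ S) (b : ι) : b ∈ S := by
  by_contra hb
  obtain ⟨m, hm⟩ := hA a b
  exact hm (A.pow_apply_eq_zero_of_forall_apply_eq_zero hS m ha hb)

end Irreducible

end Matrix

section SpecRad

variable {n : Type*} [Fintype n] [DecidableEq n]

theorem norm_le_specRad_of_isRoot (B : Matrix n n ℝ) {z : ℂ}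
    (hz : (B.charpoly.map (algebraMap ℝ ℂ)).IsRoot z) : ‖z‖ ≤ specRad B :=
  le_csSup
    ((Polynomial.finite_setOfPred_isRoot ((charpoly_monic B).map _).ne_zero).image _).bddAbove
    ⟨z, hz, rfl⟩

theorem abs_le_specRad_of_isRoot (B : Matrix n n ℝ) {μ : ℝ} (hμ : B.charpoly.IsRoot μ) :
    |μ| ≤ specRad B := by
  simpa using norm_le_specRad_of_isRoot B (z := μ) (by simpa using hμ.map (f := algebraMap ℝ ℂ))

theorem specRad_le_of_forall_sum_abs_le (B : Matrix n n ℝ) {r : ℝ} (hr : 0 ≤ r)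
    (hB : ∀ k, ∑ t, |B k t| ≤ r) : specRad B ≤ r := by
  refine Real.sSup_le ?_ hr
  rintro _ ⟨z, hz, rfl⟩
  have hz : Module.End.HasEigenvalue (toLin' (B.map (algebraMap ℝ ℂ))) z := by
    rwa [Module.End.hasEigenvalue_iff_isRoot_charpoly, charpoly_toLin', charpoly_map]
  obtain ⟨k, hk⟩ := eigenvalue_mem_ball hz
  calc ‖z‖ ≤ ‖(B k k : ℂ)‖ + ∑ t ∈ Finset.univ.erase k, ‖(B k t : ℂ)‖ :=
        norm_le_of_mem_closedBall hk
    _ = ∑ t, |B k t| := by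
      simp only [Complex.norm_real, Real.norm_eq_abs]
      exact Finset.add_sum_erase _ (fun t => |B k t|) (Finset.mem_univ k)
    _ ≤ r := hB k

theorem le_specRad_of_mul_dotProduct_le {B : Matrix n n ℝ} (hB : B.IsSymm) {w : n → ℝ}
    (hw : 0 < w ⬝ᵥ w) {c : ℝ} (hc : c * (w ⬝ᵥ w) ≤ w ⬝ᵥ (B *ᵥ w)) : c ≤ specRad B := by
  obtain ⟨μ, hμ, hle⟩ :=
    (isHermitian_iff_isSymm.mpr hB).exists_isRoot_charpoly_dotProduct_mulVec_le (w := w)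
    (by rintro rfl; simp at hw)
  calc c ≤ μ := le_of_mul_le_mul_right (hc.trans hle) hw
    _ ≤ |μ| := le_abs_self μ
    _ ≤ specRad B := abs_le_specRad_of_isRoot B hμ

theorem apply_le_specRad {B : Matrix n n ℝ} (hB : B.IsSymm) (hB₀ : ∀ i j, 0 ≤ B i j) {a b : n}
    (hab : a ≠ b) : B a b ≤ specRad B := by
  refine le_specRad_of_mul_dotProduct_le hB (w := Pi.single a 1 + Pi.single b 1)
    (by simp [dotProduct_add, hab, hab.symm]) ?_
  simp [mulVec_add, dotProduct_add, add_dotProduct, mulVec_single, hab, hab.symm, hB.apply a b]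
  linarith [hB₀ a a, hB₀ b b]

theorem sqrt_five_le_specRad_of_double_edge_of_adj {B : Matrix n n ℝ} (hB : B.IsSymm)
    (hB₀ : ∀ i j, 0 ≤ B i j) {u v k : n} (huv : u ≠ v) (hku : k ≠ u) (hkv : k ≠ v)
    (h2 : 2 ≤ B u v) (h1 : 1 ≤ B v k) : √5 ≤ specRad B := by
  have hs : 0 ≤ √5 := Real.sqrt_nonneg 5
  refine le_specRad_of_mul_dotProduct_le hB
    (w := Pi.single u 2 + Pi.single v √5 + Pi.single k 1) ?_ ?_
  · simp [dotProduct_add, huv, hku, hkv, huv.symm, hku.symm, hkv.symm]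
    norm_num
  · simp [mulVec_add, dotProduct_add, add_dotProduct, mulVec_single, huv, hku, hkv, huv.symm,
      hku.symm, hkv.symm, hB.apply u v, hB.apply u k, hB.apply v k]
    nlinarith [mul_le_mul_of_nonneg_left h2 hs, mul_le_mul_of_nonneg_left h1 hs,
      mul_nonneg (mul_nonneg hs hs) (hB₀ v v), hB₀ u u, hB₀ u k, hB₀ k k]

theorem specRad_le_of_forall_eq_or_eq {B : Matrix n n ℝ} {i j : n} (hij : i ≠ j)
    (hall : ∀ t, t = i ∨ t = j) (hdiag : ∀ t, B t t = 0) {r : ℝ} (hBij : |B i j| ≤ r)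
    (hBji : |B j i| ≤ r) : specRad B ≤ r := by
  have huniv : (Finset.univ : Finset n) = {i, j} := by ext t; simpa using hall t
  refine specRad_le_of_forall_sum_abs_le B ((abs_nonneg _).trans hBij) fun k => ?_
  rw [huniv, Finset.sum_pair hij]
  rcases hall k with rfl | rfl <;> simpa [hdiag]

end SpecRad

/-- Let `A` be a symmetric matrix with nonnegative integer entries and zero diagonal
(the adjacency matrix of a finite multigraph without loops) which is irreducible (i.e.,
the multigraph is connected: for all `i, j` some power of `A` has nonzero `(i,j)` entry),
and suppose some entry of `A` is at least `2` (a multiple edge). If the spectral radius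
of `A` is strictly greater than `2`, then it is at least `√5`. -/
theorem stmt15 {n : ℕ} (A : Matrix (Fin n) (Fin n) ℕ)
    (hsymm : A.IsSymm) (hdiag : ∀ i, A i i = 0)
    (hirr : ∀ i j : Fin n, ∃ k : ℕ, (A ^ k) i j ≠ 0)
    (hmult : ∃ i j : Fin n, 2 ≤ A i j)
    (hgt : 2 < specRad (A.map (fun a => (a : ℝ)))) :
    Real.sqrt 5 ≤ specRad (A.map (fun a => (a : ℝ))) := by
  set B := A.map (fun a => (a : ℝ))
  have hB : B.IsSymm := hsymm.map _
  have hB₀ : ∀ i j, 0 ≤ B i j := fun i j => Nat.cast_nonneg _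
  have hne : ∀ {a b}, 2 ≤ A a b → a ≠ b := by rintro a b h rfl; simp [hdiag] at h
  obtain ⟨i, j, hij⟩ := hmult
  by_cases h3 : ∃ a b, 3 ≤ A a b
  · obtain ⟨a, b, hab⟩ := h3
    calc √5 ≤ 3 := Real.sqrt_le_iff.mpr ⟨by norm_num, by norm_num⟩
      _ ≤ B a b := by simpa [B] using hab
      _ ≤ specRad B := apply_le_specRad hB hB₀ (hne (by omega))
  by_cases hexit : ∃ a ∈ ({i, j} : Set (Fin n)), ∃ b ∉ ({i, j} : Set (Fin n)), A a b ≠ 0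
  · obtain ⟨a, ha, b, hb, hab⟩ := hexit
    simp only [Set.mem_insert_iff, Set.mem_singleton_iff, not_or] at ha hb
    have hab : 1 ≤ B a b := by simpa [B, Nat.one_le_iff_ne_zero] using hab
    rcases ha with rfl | rfl
    · exact sqrt_five_le_specRad_of_double_edge_of_adj hB hB₀ (hne hij).symm hb.2 hb.1
        (by simpa [B, hsymm.apply] using hij) hab
    · exact sqrt_five_le_specRad_of_double_edge_of_adj hB hB₀ (hne hij) hb.1 hb.2
        (by simpa [B] using hij) hab
  push Not at h3 hexit
  have hall (t : Fin n) : t = i ∨ t = j :=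
    A.mem_of_forall_apply_eq_zero hirr hexit (a := i) (by simp) t
  have hle (a b : Fin n) : |B a b| ≤ 2 := by
    simpa [B] using (show A a b ≤ 2 by have := h3 a b; omega)
  exact absurd hgt (not_lt.mpr (specRad_le_of_forall_eq_or_eq (hne hij) hall
    (by simp [B, hdiag]) (hle i j) (hle j i)))
end

section
/- Let q ≥ 2 be an integer and set μ = 2·cos(π/(2q)). Then the matrix C = γ₁(μ)·γ₂(μ) = !![1 - μ², μ; -μ, 1] has order exactly q in PSL(2, ℝ): C^q = I or C^q = -I, and for every integer n with 0 < n < q, C^n ∉ {I, -I}. -/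
/-!
The product `C = γ₁(μ) γ₂(μ)` lies in `SL(2, ℝ)` and has trace `2 - μ² = 2 cos θ` with
`θ = π - π/q`. By Cayley–Hamilton, `C² = 2 cos θ · C - 1`, so the powers of `C` follow the
Chebyshev recursion `sin θ · Cⁿ = sin (nθ) · C - sin ((n-1)θ) · 1`. As `qθ` is a multiple of `π`,
this gives `C^q = cos (qθ) · 1 = ±1`; for `0 < n < q` we have `sin (nθ) ≠ 0`, so the upper-right
entry of `Cⁿ` is a nonzero multiple of `μ` and `Cⁿ ≠ ±1`.
-/

open Matrix
open scoped MatrixGroups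

open Real

namespace Matrix

theorem sq_fin_two_eq_trace_smul_sub_det_smul {R : Type*} [CommRing R]
    (A : Matrix (Fin 2) (Fin 2) R) : A ^ 2 = A.trace • A - A.det • 1 := by
  nontriviality R
  have h := A.aeval_self_charpoly
  simp only [charpoly_fin_two, map_add, map_sub, map_mul, Polynomial.aeval_X,
    Polynomial.aeval_C, map_pow, Algebra.algebraMap_eq_smul_one, smul_mul_assoc, one_mul] at h
  rw [← sub_eq_zero, ← h]
  abel

variable {A : Matrix (Fin 2) (Fin 2) ℝ} {θ : ℝ}

theorem sin_smul_pow_of_trace_eq_two_mul_cos (hdet : A.det = 1) (htr : A.trace = 2 * cos θ)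
    (n : ℕ) : sin θ • A ^ n = sin (n * θ) • A - sin ((n - 1) * θ) • 1 := by
  induction n with
  | zero => simp [neg_mul, sin_neg]
  | succ n ih =>
    have hsin : sin ((n + 1) * θ) = 2 * cos θ * sin (n * θ) - sin ((n - 1) * θ) := by
      rw [add_mul, sub_mul, one_mul, sin_add, sin_sub]; ring
    rw [pow_succ, ← smul_mul_assoc, ih, sub_mul, smul_mul_assoc, ← sq,
      sq_fin_two_eq_trace_smul_sub_det_smul, hdet, htr, smul_mul_assoc, one_mul]
    push_cast
    rw [add_sub_cancel_right, hsin]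
    module

theorem pow_eq_one_or_eq_neg_one_of_sin_eq_zero (hdet : A.det = 1) (htr : A.trace = 2 * cos θ)
    (hθ : sin θ ≠ 0) {n : ℕ} (hn : sin (n * θ) = 0) : A ^ n = 1 ∨ A ^ n = -1 := by
  have hsmul : sin θ • A ^ n = sin θ • cos (n * θ) • (1 : Matrix (Fin 2) (Fin 2) ℝ) := by
    rw [sin_smul_pow_of_trace_eq_two_mul_cos hdet htr, sub_mul, one_mul, sin_sub, hn, smul_smul]
    module
  have hcos : cos (n * θ) ^ 2 = 1 := by nlinarith [sin_sq_add_cos_sq (n * θ)]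
  rw [smul_right_injective _ hθ hsmul]
  rcases sq_eq_one_iff.mp hcos with h | h
  · exact .inl (by rw [h, one_smul])
  · exact .inr (by rw [h, neg_one_smul])

theorem pow_apply_zero_one_ne_zero (hdet : A.det = 1) (htr : A.trace = 2 * cos θ) {n : ℕ}
    (hn : sin (n * θ) ≠ 0) (hA : A 0 1 ≠ 0) : (A ^ n) 0 1 ≠ 0 := by
  intro h
  have h01 := congr_fun₂ (sin_smul_pow_of_trace_eq_two_mul_cos hdet htr n) 0 1
  simp only [smul_apply, sub_apply, one_apply_ne zero_ne_one, h, smul_eq_mul, mul_zero,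
    sub_zero] at h01
  exact mul_ne_zero hn hA h01.symm

end Matrix

theorem two_sub_sq_two_mul_cos (x : ℝ) : 2 - (2 * cos x) ^ 2 = 2 * cos (π - 2 * x) := by
  rw [cos_pi_sub, cos_two_mul]; ring

theorem sin_nat_mul_pi_sub_pi_div_ne_zero {n q : ℕ} (hn : 0 < n) (hnq : n < q) :
    sin (n * (π - π / q)) ≠ 0 := by
  have hq : (0 : ℝ) < q := by exact_mod_cast hn.trans hnq
  have hnq' : (n : ℝ) < q := by exact_mod_cast hnq
  rw [mul_sub, sin_nat_mul_pi_sub, neg_ne_zero]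
  refine mul_ne_zero (pow_ne_zero _ (by norm_num)) (sin_pos_of_pos_of_lt_pi ?_ ?_).ne'
  · have : (0 : ℝ) < n := by exact_mod_cast hn
    positivity
  · rw [mul_div_assoc', div_lt_iff₀ hq]
    nlinarith [pi_pos]

theorem sin_nat_mul_pi_sub_pi_div_self {q : ℕ} (hq : q ≠ 0) : sin (q * (π - π / q)) = 0 := by
  rw [mul_sub, mul_div_cancel₀ _ (Nat.cast_ne_zero.mpr hq), sin_sub_pi, sin_nat_mul_pi, neg_zero]

theorem cos_pi_div_two_mul_pos {q : ℕ} (hq : 1 < q) : 0 < cos (π / (2 * q)) := by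
  have hq' : (1 : ℝ) < q := by exact_mod_cast hq
  refine cos_pos_of_mem_Ioo ⟨?_, ?_⟩
  · linarith [div_pos pi_pos (by linarith : (0 : ℝ) < 2 * q), pi_pos]
  · rw [div_lt_div_iff_of_pos_left pi_pos (by positivity) two_pos]
    linarith

theorem coe_gamma1_mul_gamma2 (μ : ℝ) :
    ((gamma1 μ * gamma2 μ : SL(2, ℝ)) : Matrix (Fin 2) (Fin 2) ℝ) = !![1 - μ ^ 2, μ; -μ, 1] := by
  rw [Matrix.SpecialLinearGroup.coe_mul, gamma1, gamma2]
  ext i j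
  fin_cases i <;> fin_cases j <;> simp [sub_eq_add_neg, sq]

/-- Let `q ≥ 2` be an integer and `μ = 2·cos(π/(2q))`. Then
`C = γ₁(μ)·γ₂(μ) = !![1 - μ², μ; -μ, 1]` has order exactly `q` in
`PSL(2, ℝ) = SL(2, ℝ)/{±I}`: `C^q = I` or `C^q = -I`, and for every integer `n` with
`0 < n < q`, `C^n ∉ {I, -I}`. -/
theorem stmt17 (q : ℕ) (hq : 2 ≤ q) (μ : ℝ) (hμ : μ = 2 * Real.cos (Real.pi / (2 * q))) :
    ((gamma1 μ * gamma2 μ : SL(2, ℝ)) : Matrix (Fin 2) (Fin 2) ℝ) = !![1 - μ ^ 2, μ; -μ, 1] ∧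
    ((((gamma1 μ * gamma2 μ) ^ q : SL(2, ℝ)) : Matrix (Fin 2) (Fin 2) ℝ) = 1 ∨
      (((gamma1 μ * gamma2 μ) ^ q : SL(2, ℝ)) : Matrix (Fin 2) (Fin 2) ℝ) = -1) ∧
    ∀ n : ℕ, 0 < n → n < q →
      (((gamma1 μ * gamma2 μ) ^ n : SL(2, ℝ)) : Matrix (Fin 2) (Fin 2) ℝ) ≠ 1 ∧
      (((gamma1 μ * gamma2 μ) ^ n : SL(2, ℝ)) : Matrix (Fin 2) (Fin 2) ℝ) ≠ -1 := by
  set C := gamma1 μ * gamma2 μ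
  have hC : (C : Matrix (Fin 2) (Fin 2) ℝ) = !![1 - μ ^ 2, μ; -μ, 1] := coe_gamma1_mul_gamma2 μ
  have htr : (C : Matrix (Fin 2) (Fin 2) ℝ).trace = 2 * cos (π - π / q) := by
    have h2q : 2 * (π / (2 * q)) = π / q := by field_simp
    rw [hC, trace_fin_two_of, ← h2q, ← two_sub_sq_two_mul_cos, hμ]
    ring
  have hθ : sin (π - π / q) ≠ 0 := by
    simpa using sin_nat_mul_pi_sub_pi_div_ne_zero one_pos hq
  have hμ0 : μ ≠ 0 := hμ ▸ mul_ne_zero two_ne_zero (cos_pi_div_two_mul_pos hq).ne'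
  refine ⟨hC, ?_, fun n hn hnq => ?_⟩
  · rw [Matrix.SpecialLinearGroup.coe_pow]
    exact pow_eq_one_or_eq_neg_one_of_sin_eq_zero C.det_coe htr hθ
      (sin_nat_mul_pi_sub_pi_div_self (by omega))
  · have hoff := pow_apply_zero_one_ne_zero C.det_coe htr
      (sin_nat_mul_pi_sub_pi_div_ne_zero hn hnq) (by simpa [hC] using hμ0)
    rw [Matrix.SpecialLinearGroup.coe_pow]
    exact ⟨fun h => hoff (by simp [h]), fun h => hoff (by simp [h])⟩
end

section
/- Let Q be a free group of rank 2 and suppose Q is a subgroup of a finite direct product G₁ × ⋯ × G_k such that, for each r, the restriction to Q of the projection π_r : G₁ × ⋯ × G_k → G_r is surjective. Then for some r the restriction of π_r to Q is an isomorphism onto G_r; in particular some G_r is a free group of rank 2. -/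
/-!
The kernels of the projections, pulled back to the free group, are normal subgroups with trivial
intersection, so it suffices that two nontrivial normal subgroups `N`, `M` of a free group always
meet. Take `x ∈ N`, `y ∈ M` nontrivial. If they do not commute, `⁅x, y⁆ ≠ 1` lies in `N ⊓ M`.
If they commute, they generate an abelian free group, which is cyclic, and torsion-freeness
gives a nontrivial common power.
-/

open Subgroup

theorem FreeGroup.not_commute_of_ne {α : Type*} {a b : α} (h : a ≠ b) :
    ¬Commute (of a) (of b) := fun hab => by
  classical
  simpa [toWord_mul, h] using congrArg toWord hab.eq

instance FreeGroup.isCyclic_of_subsingleton {α : Type*} [Subsingleton α] :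
    IsCyclic (FreeGroup α) := by
  cases isEmpty_or_nonempty α
  · infer_instance
  · have := uniqueOfSubsingleton (Classical.arbitrary α)
    infer_instance

theorem IsFreeGroup.isCyclic_of_isMulCommutative (F : Type*) [Group F] [IsFreeGroup F]
    [IsMulCommutative F] : IsCyclic F := by
  let e := IsFreeGroup.toFreeGroup F
  have : Subsingleton (Generators F) := ⟨fun a b => by
    by_contra hab
    refine FreeGroup.not_commute_of_ne hab ?_
    simpa using Commute.map (isMulCommutative_iff.mp ‹_› (e.symm (.of a)) (e.symm (.of b))) e⟩
  exact e.isCyclic.mpr inferInstance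

theorem FreeGroup.exists_mem_zpowers_of_commute {α : Type*} {x y : FreeGroup α}
    (h : Commute x y) : ∃ z, x ∈ zpowers z ∧ y ∈ zpowers z := by
  have := isMulCommutative_closure (k := {x, y}) <| by
    rintro _ (rfl | rfl) _ (rfl | rfl) <;> first | rfl | exact h.eq | exact h.symm.eq
  obtain ⟨z, hz⟩ := IsFreeGroup.isCyclic_of_isMulCommutative (closure {x, y})
  have mem_zpowers (w) (hw : w ∈ closure {x, y}) : w ∈ zpowers (z : FreeGroup α) := by
    obtain ⟨n, hn⟩ := hz ⟨w, hw⟩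
    exact ⟨n, congrArg Subtype.val hn⟩
  exact ⟨z, mem_zpowers x (subset_closure (by simp)), mem_zpowers y (subset_closure (by simp))⟩

theorem zpowers_inf_zpowers_ne_bot {G : Type*} [Group G] [IsMulTorsionFree G] {x y z : G}
    (hx : x ∈ zpowers z) (hy : y ∈ zpowers z) (hx1 : x ≠ 1) (hy1 : y ≠ 1) :
    zpowers x ⊓ zpowers y ≠ ⊥ := by
  obtain ⟨a, rfl⟩ := hx
  obtain ⟨b, rfl⟩ := hy
  rw [Ne, IsMulTorsionFree.zpow_eq_one_iff, not_or] at hx1 hy1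
  rw [ne_bot_iff_exists_ne_one]
  refine ⟨⟨z ^ (a * b), ⟨b, ?_⟩, ⟨a, ?_⟩⟩, ?_⟩
  · simp [← zpow_mul]
  · simp [← zpow_mul, mul_comm]
  · simp [Subtype.ext_iff, IsMulTorsionFree.zpow_eq_one_iff, hx1.1, hx1.2, hy1.2]

theorem FreeGroup.inf_ne_bot_of_normal {α : Type*} {N M : Subgroup (FreeGroup α)} [N.Normal]
    [M.Normal] (hN : N ≠ ⊥) (hM : M ≠ ⊥) : N ⊓ M ≠ ⊥ := by
  obtain ⟨x, hxN, hx⟩ := N.bot_or_exists_ne_one.resolve_left hN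
  obtain ⟨y, hyM, hy⟩ := M.bot_or_exists_ne_one.resolve_left hM
  by_cases hxy : Commute x y
  · obtain ⟨z, hxz, hyz⟩ := exists_mem_zpowers_of_commute hxy
    exact ne_bot_of_le_ne_bot (zpowers_inf_zpowers_ne_bot hxz hyz hx hy)
      (inf_le_inf (zpowers_le.mpr hxN) (zpowers_le.mpr hyM))
  · refine ne_bot_of_le_ne_bot ?_ (commutator_le_inf N M)
    exact ne_bot_iff_exists_ne_one.mpr ⟨⟨_, commutator_mem_commutator hxN hyM⟩,
      by simpa [Subtype.ext_iff, commutatorElement_eq_one_iff_commute] using hxy⟩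

theorem Subgroup.iInf_ne_bot_of_normal {G ι : Type*} [Group G] [Nontrivial G] [Finite ι]
    (hG : ∀ N M : Subgroup G, N.Normal → M.Normal → N ≠ ⊥ → M ≠ ⊥ → N ⊓ M ≠ ⊥)
    {N : ι → Subgroup G} (hN : ∀ i, (N i).Normal) (hbot : ∀ i, N i ≠ ⊥) : ⨅ i, N i ≠ ⊥ := by
  classical
  have := Fintype.ofFinite ι
  suffices ∀ s : Finset ι, ⨅ i ∈ s, N i ≠ ⊥ by simpa using this Finset.univ
  intro s
  induction s using Finset.induction_on with
  | empty => simp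
  | insert i s _ ih =>
    rw [Finset.iInf_insert]
    exact hG _ _ (hN i) (normal_iInf_normal fun i => normal_iInf_normal fun _ => hN i) (hbot i) ih

theorem exists_injective_of_injective_pi {F ι : Type*} {G : ι → Type*} [Group F] [Nontrivial F]
    [∀ i, Group (G i)] [Finite ι]
    (hF : ∀ N M : Subgroup F, N.Normal → M.Normal → N ≠ ⊥ → M ≠ ⊥ → N ⊓ M ≠ ⊥)
    (f : ∀ i, F →* G i) (hf : Function.Injective (MonoidHom.pi f)) :
    ∃ i, Function.Injective (f i) := by
  by_contra! h
  refine iInf_ne_bot_of_normal hF (fun i => (f i).normal_ker)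
    (fun i => mt (f i).ker_eq_bot_iff.mp (h i)) ?_
  rw [← (MonoidHom.pi f).ker_eq_bot_iff.mpr hf]
  ext x
  simp [funext_iff]

/-- Let `Q` be a free group of rank 2 realized as a subgroup of a finite direct product
`G₁ × ⋯ × G_k` such that, for each `r`, the restriction to `Q` of the projection
`π_r : G₁ × ⋯ × G_k → G_r` is surjective. Then for some `r` the restriction of `π_r` to
`Q` is an isomorphism onto `G_r`; in particular some `G_r` is a free group of rank 2. -/
theorem stmt18 {k : ℕ} (G : Fin k → Type*) [∀ r, Group (G r)]
    (Q : Subgroup (∀ r, G r))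
    (hfree : Nonempty (FreeGroup (Fin 2) ≃* Q))
    (hsurj : ∀ r : Fin k, Function.Surjective (fun q : Q => (q : ∀ i, G i) r)) :
    ∃ r : Fin k, Function.Bijective (fun q : Q => (q : ∀ i, G i) r) ∧
      Nonempty (FreeGroup (Fin 2) ≃* G r) := by
  obtain ⟨e⟩ := hfree
  let π (r : Fin k) : Q →* G r := (Pi.evalMonoidHom G r).comp Q.subtype
  obtain ⟨r, hr⟩ := exists_injective_of_injective_pi
    (fun _ _ _ _ => FreeGroup.inf_ne_bot_of_normal) (fun r => (π r).comp e.toMonoidHom)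
    (Subtype.val_injective.comp e.injective)
  have hbij : Function.Bijective (π r) :=
    ⟨(Function.Injective.of_comp_iff' _ e.bijective).mp hr, hsurj r⟩
  exact ⟨r, hbij, ⟨e.trans (MulEquiv.ofBijective (π r) hbij)⟩⟩
end
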